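/- Let G = (V, E) be a finite undirected graph, let Ē be the edge set of its complement graph, and let the feature set be indexed by Ē. For each vertex v ∈ V, construct a decision tree π_V(v) as follows: if v is incident to no edge of Ē, then π_V(v) is a single leaf with label +1; otherwise π_V(v) is a chain of internal nodes, one per edge e ∈ Ē incident to v (in any fixed order), each testing the feature indexed by e with threshold 1, where every left child leading out of the chain is a leaf with label −1 and the final right descendant is a leaf with label +1. Let T = {π_V(v) : v ∈ V}. Then for every natural number s: G contains a clique of size s if and only if there exists a subset T' ⊆ T with |T'| = s such that no two distinct trees of T' contain internal nodes testing the same feature (equivalently, T' is large-spread for the attacker A_{0,0}, i.e., ψ_0(T') > 0). -/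
import Mathlib


/-- A binary decision tree over an arbitrary feature set `F`, with labels in
`{+1, -1}` (encoded as `Bool`, `true` for `+1` and `false` for `-1`). -/
inductive DTree (F : Type*) : Type _ where
  | leaf (y : Bool) : DTree F
  | node (f : F) (v : ℝ) (tl tr : DTree F) : DTree F

/-- `usesFeature t f` holds iff `t` contains an internal node testing feature `f`. -/
def usesFeature {F : Type*} : DTree F → F → Prop
  | .leaf _, _ => False
  | .node f _ tl tr, f' => f = f' ∨ usesFeature tl f' ∨ usesFeature tr f'

/-- The decision tree `π_V(v)` built from the list of features (edges of the
complement graph incident to `v`): for the empty list, a single leaf with label `+1`;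
otherwise a chain of internal nodes, one per feature in order, each testing its
feature with threshold `1`, whose left child is a leaf with label `−1`, the final
right descendant being a leaf with label `+1`. -/
noncomputable def chain {F : Type*} : List F → DTree F
  | [] => .leaf true
  | f :: fs => .node f 1 (.leaf false) (chain fs)

lemma usesFeature_chain {F : Type*} (l : List F) (f : F) :
    usesFeature (chain l) f ↔ f ∈ l := by
  induction l with
  | nil => simp [chain, usesFeature]
  | cons a t ih => simp [chain, usesFeature, ih, eq_comm]

/-- Let `G = (V, E)` be a finite undirected graph and `Ē` the edge set of its
complement graph, indexing the feature set. For each vertex `v`, let `L v` be a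
duplicate-free list enumerating (in any fixed order) the edges of `Ē` incident to
`v`, and let `π_V(v) = chain (L v)` be the decision tree described above, so that
`T = {π_V(v) : v ∈ V}`. Then for every natural number `s`: `G` contains a clique of
size `s` if and only if there exists a subset `T' ⊆ T` of `s` of the trees (given by
a set `S` of `s` vertices) such that no two distinct trees of `T'` contain internal
nodes testing the same feature (equivalently, `T'` is large-spread for the attacker
`A_{0,0}`, i.e. `ψ₀(T') > 0`). -/
theorem stmt14 {V : Type*} [Fintype V] [DecidableEq V] (G : SimpleGraph V)
    (L : V → List (Sym2 V)) (hnodup : ∀ v, (L v).Nodup)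
    (hL : ∀ v e, e ∈ L v ↔ e ∈ Gᶜ.edgeSet ∧ v ∈ e) (s : ℕ) :
    (∃ S : Finset V, G.IsNClique s S) ↔
      ∃ S : Finset V, S.card = s ∧
        ∀ u ∈ S, ∀ w ∈ S, u ≠ w →
          ¬ ∃ f : Sym2 V, usesFeature (chain (L u)) f ∧ usesFeature (chain (L w)) f := by
  have key : ∀ u w : V, u ≠ w →
      ((∃ f : Sym2 V, usesFeature (chain (L u)) f ∧ usesFeature (chain (L w)) f) ↔
        ¬ G.Adj u w) := by
    intro u w huw
    simp only [usesFeature_chain, hL]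
    constructor
    · rintro ⟨f, ⟨hf, hu⟩, ⟨_, hw⟩⟩
      have : f = s(u, w) := (Sym2.mem_and_mem_iff huw).mp ⟨hu, hw⟩
      subst this
      rw [SimpleGraph.mem_edgeSet, SimpleGraph.compl_adj] at hf
      exact hf.2
    · intro hna
      refine ⟨s(u, w), ⟨?_, Sym2.mem_mk_left u w⟩, ?_, Sym2.mem_mk_right u w⟩ <;>
        simp [SimpleGraph.mem_edgeSet, SimpleGraph.compl_adj, huw, hna]
  constructor
  · rintro ⟨S, hS⟩
    exact ⟨S, hS.card_eq, fun u hu w hw huw h =>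
      ((key u w huw).mp h) (hS.isClique hu hw huw)⟩
  · rintro ⟨S, hcard, h⟩
    refine ⟨S, ⟨fun u hu w hw huw => ?_, hcard⟩⟩
    by_contra hna
    exact h u hu w hw huw ((key u w huw).mpr hna)
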